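/- Let (y_n), (z_n), (x_n) be real sequences with y_n = z_n + x_n, z_n → z, and suppose i(x_n; A) = μ(A) for all Peano–Jordan measurable A ⊆ ℝ, where μ(A) := |g⁻¹(c⁻¹A)| for some fixed c ≠ 0 and g as above. Then i(y_n; A) = μ(A − z) for every Peano–Jordan measurable A ⊆ ℝ. More generally: if z_n → z, then for any set A, i(x_n + z_n; A + z) = i(x_n; A). -/

import Mathlib

open Filter Set MeasureTheory
open scoped Classical Pointwise

/-- Upper density of a subset of `ℕ²`. -/
noncomputable def upperDensity2 (K : Set (ℕ × ℕ)) : ℝ :=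
  limsup (fun n : ℕ =>
    ((((Finset.Icc 1 n) ×ˢ (Finset.Icc 1 n)).filter (fun p => p ∈ K)).card : ℝ) / (n : ℝ) ^ 2)
    atTop

/-- Lower density of a subset of `ℕ²`. -/
noncomputable def lowerDensity2 (K : Set (ℕ × ℕ)) : ℝ :=
  liminf (fun n : ℕ =>
    ((((Finset.Icc 1 n) ×ˢ (Finset.Icc 1 n)).filter (fun p => p ∈ K)).card : ℝ) / (n : ℝ) ^ 2)
    atTop

/-- Upper density of a subset of `ℕ`. -/
noncomputable def upperDensity1 (K : Set ℕ) : ℝ :=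
  limsup (fun n : ℕ =>
    (((Finset.Icc 1 n).filter (fun k => k ∈ K)).card : ℝ) / (n : ℝ)) atTop

/-- Lower density of a subset of `ℕ`. -/
noncomputable def lowerDensity1 (K : Set ℕ) : ℝ :=
  liminf (fun n : ℕ =>
    (((Finset.Icc 1 n).filter (fun k => k ∈ K)).card : ℝ) / (n : ℝ)) atTop

/-- Index of convergence of a double sequence to `L ∈ ℝ`. -/
noncomputable def idx2 (x : ℕ → ℕ → ℝ) (L : ℝ) : ℝ :=
  1 - ⨆ ε > (0 : ℝ), upperDensity2 {p | x p.1 p.2 ∉ Set.Ioo (L - ε) (L + ε)}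

/-- Index of convergence of a double sequence to a set `A ⊆ ℝ`. -/
noncomputable def idxSet2 (x : ℕ → ℕ → ℝ) (A : Set ℝ) : ℝ :=
  1 - ⨆ ε > (0 : ℝ), upperDensity2 {p | x p.1 p.2 ∉ A + Set.Ioo (-ε) ε}

/-- Index of convergence of a sequence to `L ∈ ℝ`. -/
noncomputable def idx1 (x : ℕ → ℝ) (L : ℝ) : ℝ :=
  1 - ⨆ ε > (0 : ℝ), upperDensity1 {n | x n ∉ Set.Ioo (L - ε) (L + ε)}

/-- Index of convergence of a sequence to a set `A ⊆ ℝ`. -/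
noncomputable def idxSet1 (x : ℕ → ℝ) (A : Set ℝ) : ℝ :=
  1 - ⨆ ε > (0 : ℝ), upperDensity1 {n | x n ∉ A + Set.Ioo (-ε) ε}

/-- `K ⊆ ℕ` has natural density `a`. -/
def HasDensity1 (K : Set ℕ) (a : ℝ) : Prop :=
  Tendsto (fun n : ℕ =>
    (((Finset.Icc 1 n).filter (fun k => k ∈ K)).card : ℝ) / (n : ℝ)) atTop (nhds a)

/-- `K ⊆ ℕ²` has natural density `a`. -/
def HasDensity2 (K : Set (ℕ × ℕ)) (a : ℝ) : Prop :=
  Tendsto (fun n : ℕ =>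
    ((((Finset.Icc 1 n) ×ˢ (Finset.Icc 1 n)).filter (fun p => p ∈ K)).card : ℝ) / (n : ℝ) ^ 2)
    atTop (nhds a)

/-- A set `A ⊆ ℝ` is Peano–Jordan measurable. -/
def JordanMeasurable1 (A : Set ℝ) : Prop :=
  Bornology.IsBounded A ∧ volume (frontier A) = 0

/-- The Peano–Jordan measure of a Jordan measurable `A ⊆ ℝ`. -/
noncomputable def jordanMeasure1 (A : Set ℝ) : ℝ := (volume A).toReal

/-- A set `A ⊆ ℝ²` is Peano–Jordan measurable. -/
def JordanMeasurable2 (A : Set (ℝ × ℝ)) : Prop :=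
  Bornology.IsBounded A ∧ volume (frontier A) = 0

/-- The Peano–Jordan measure of a Jordan measurable `A ⊆ ℝ²`. -/
noncomputable def jordanMeasure2 (A : Set (ℝ × ℝ)) : ℝ := (volume A).toReal

/-- Chebyshev nodes of the second kind: `x_{n,k} = cos((k-1)π/(n-1))`, `k = 1,…,n`. -/
noncomputable def chebNode (n k : ℕ) : ℝ :=
  Real.cos (((k : ℝ) - 1) * Real.pi / ((n : ℝ) - 1))

/-- Fundamental Lagrange polynomial at the Chebyshev nodes of second kind. -/
noncomputable def lagBasis (n k : ℕ) (x : ℝ) : ℝ :=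
  ∏ i ∈ (Finset.Icc 1 n).erase k, (x - chebNode n i) / (chebNode n k - chebNode n i)

/-- Lagrange interpolation operator at the `n` Chebyshev nodes of the second kind. -/
noncomputable def lagrangeOp (n : ℕ) (f : ℝ → ℝ) (x : ℝ) : ℝ :=
  ∑ k ∈ Finset.Icc 1 n, lagBasis n k x * f (chebNode n k)

/-- The step function `h_{x₀,d}`. -/
noncomputable def stepFun (x₀ d : ℝ) : ℝ → ℝ :=
  fun x => if x < x₀ then 0 else if x = x₀ then d else 1

/-- The function `g(x) = (sin πx / π) · Σ_{n≥0} (-1)ⁿ/(n+x)`. -/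
noncomputable def lerchg (x : ℝ) : ℝ :=
  Real.sin (Real.pi * x) / Real.pi * ∑' n : ℕ, (-1 : ℝ) ^ n / ((n : ℝ) + x)

/-!
The index only sees, for each `ε > 0`, how often the sequence stays `ε`-away from `A`.
Translating both the sequence and `A` by `z` changes nothing, and replacing `x n + z` by
`x n + zn n` moves the terms by an amount that eventually drops below `ε / 2`; outside a
finite set of indices this trades the `ε`-neighbourhood for the `ε / 2`-one, and finite sets
do not affect upper density. Part (1) is then part (2) applied to the translate `A - z`, which
is again Peano–Jordan measurable.
-/

open Topology

noncomputable def countRatio (K : Set ℕ) (n : ℕ) : ℝ :=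
  (((Finset.Icc 1 n).filter (fun k => k ∈ K)).card : ℝ) / (n : ℝ)

lemma upperDensity1_eq_limsup (K : Set ℕ) : upperDensity1 K = limsup (countRatio K) atTop := rfl

lemma countRatio_nonneg (K : Set ℕ) (n : ℕ) : 0 ≤ countRatio K n := by
  unfold countRatio
  positivity

lemma countRatio_le_one (K : Set ℕ) (n : ℕ) : countRatio K n ≤ 1 := by
  refine div_le_one_of_le₀ ?_ n.cast_nonneg
  calc (((Finset.Icc 1 n).filter (fun k => k ∈ K)).card : ℝ)
      ≤ (Finset.Icc 1 n).card := by exact_mod_cast Finset.card_filter_le _ _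
    _ = n := by simp

lemma isBoundedUnder_le_countRatio (K : Set ℕ) :
    IsBoundedUnder (· ≤ ·) atTop (countRatio K) :=
  isBoundedUnder_of ⟨1, countRatio_le_one K⟩

lemma isBoundedUnder_ge_countRatio (K : Set ℕ) :
    IsBoundedUnder (· ≥ ·) atTop (countRatio K) :=
  isBoundedUnder_of ⟨0, countRatio_nonneg K⟩

lemma upperDensity1_nonneg (K : Set ℕ) : 0 ≤ upperDensity1 K :=
  le_limsup_of_frequently_le (Frequently.of_forall (countRatio_nonneg K))
    (isBoundedUnder_le_countRatio K)

lemma upperDensity1_le_one (K : Set ℕ) : upperDensity1 K ≤ 1 :=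
  limsup_le_of_le (isBoundedUnder_ge_countRatio K).isCoboundedUnder_le
    (Eventually.of_forall (countRatio_le_one K))

lemma countRatio_le_add_of_forall_gt {K K' : Set ℕ} {N : ℕ} (h : ∀ k > N, k ∈ K → k ∈ K')
    (n : ℕ) : countRatio K n ≤ countRatio K' n + N / n := by
  have hsub : (Finset.Icc 1 n).filter (fun k => k ∈ K) ⊆
      (Finset.Icc 1 n).filter (fun k => k ∈ K') ∪ Finset.Icc 1 N := by
    intro k hk
    rw [Finset.mem_filter, Finset.mem_Icc] at hk
    rw [Finset.mem_union, Finset.mem_filter, Finset.mem_Icc, Finset.mem_Icc]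
    by_cases hkN : k ≤ N
    · exact Or.inr ⟨hk.1.1, hkN⟩
    · exact Or.inl ⟨hk.1, h k (not_le.mp hkN) hk.2⟩
  have hcard : (((Finset.Icc 1 n).filter (fun k => k ∈ K)).card : ℝ)
      ≤ ((Finset.Icc 1 n).filter (fun k => k ∈ K')).card + N := by
    have := (Finset.card_le_card hsub).trans (Finset.card_union_le _ _)
    rw [Nat.card_Icc, Nat.add_sub_cancel] at this
    exact_mod_cast this
  rw [countRatio, countRatio, ← add_div]
  exact div_le_div_of_nonneg_right hcard n.cast_nonneg

lemma upperDensity1_mono_of_eventually {K K' : Set ℕ} (h : ∀ᶠ k in atTop, k ∈ K → k ∈ K') :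
    upperDensity1 K ≤ upperDensity1 K' := by
  obtain ⟨N, hN⟩ := eventually_atTop.mp h
  have hvanish : Tendsto (fun n : ℕ => (N : ℝ) / n) atTop (𝓝 0) :=
    tendsto_const_div_atTop_nhds_zero_nat (N : ℝ)
  rw [upperDensity1_eq_limsup, upperDensity1_eq_limsup]
  calc limsup (countRatio K) atTop
      ≤ limsup (countRatio K' + fun n : ℕ => (N : ℝ) / n) atTop :=
        limsup_le_limsup
          (Eventually.of_forall (countRatio_le_add_of_forall_gt fun k hk => hN k hk.le))
          (isBoundedUnder_ge_countRatio K).isCoboundedUnder_le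
          (isBoundedUnder_le_add (isBoundedUnder_le_countRatio K') hvanish.isBoundedUnder_le)
    _ ≤ limsup (countRatio K') atTop + limsup (fun n : ℕ => (N : ℝ) / n) atTop :=
        limsup_add_le (isBoundedUnder_ge_countRatio K') (isBoundedUnder_le_countRatio K')
          hvanish.isBoundedUnder_ge.isCoboundedUnder_le hvanish.isBoundedUnder_le
    _ = limsup (countRatio K') atTop := by rw [hvanish.limsup_eq, add_zero]

/-- `g ≥ 0` is needed because for `δ ≤ 0` the empty supremum `⨆ _ : δ > 0, g δ` is `0` in `ℝ`. -/
lemma iSup_pos_le_iSup_pos {f g : ℝ → ℝ} (hg_nonneg : ∀ ε, 0 ≤ g ε) (hg_bdd : BddAbove (range g))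
    (h : ∀ ε > 0, ∃ δ > 0, f ε ≤ g δ) :
    ⨆ ε > (0 : ℝ), f ε ≤ ⨆ ε > (0 : ℝ), g ε := by
  obtain ⟨C, hC⟩ := hg_bdd
  have hbdd : BddAbove (range fun δ : ℝ => ⨆ _ : δ > 0, g δ) :=
    ⟨C, forall_mem_range.mpr fun δ =>
      Real.iSup_le (fun _ => hC (mem_range_self δ)) ((hg_nonneg δ).trans (hC (mem_range_self δ)))⟩
  have hsup_nonneg : 0 ≤ ⨆ δ > (0 : ℝ), g δ :=
    Real.iSup_nonneg fun δ => Real.iSup_nonneg fun _ => hg_nonneg δ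
  refine Real.iSup_le (fun ε => Real.iSup_le (fun hε => ?_) hsup_nonneg) hsup_nonneg
  obtain ⟨δ, hδ, hfg⟩ := h ε hε
  calc f ε ≤ g δ := hfg
    _ = ⨆ _ : δ > 0, g δ := (ciSup_pos (f := fun _ => g δ) hδ).symm
    _ ≤ ⨆ δ > (0 : ℝ), g δ := le_ciSup hbdd δ

lemma mem_add_Ioo_of_abs_sub_lt {A : Set ℝ} {a b δ η : ℝ} (ha : a ∈ A + Ioo (-δ) δ)
    (hab : |b - a| < η) : b ∈ A + Ioo (-(δ + η)) (δ + η) := by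
  obtain ⟨p, hp, t, ⟨ht₁, ht₂⟩, rfl⟩ := ha
  obtain ⟨h₁, h₂⟩ := abs_lt.mp hab
  exact ⟨p, hp, t + (b - (p + t)), ⟨by linarith, by linarith⟩, by ring⟩

lemma idxSet1_le_of_tendsto_sub {x w : ℕ → ℝ} (hxw : Tendsto (fun n => w n - x n) atTop (𝓝 0))
    (A : Set ℝ) : idxSet1 x A ≤ idxSet1 w A := by
  refine sub_le_sub_left (iSup_pos_le_iSup_pos (fun _ => upperDensity1_nonneg _)
    ⟨1, forall_mem_range.mpr fun _ => upperDensity1_le_one _⟩ fun ε hε => ⟨ε / 2, half_pos hε, ?_⟩) 1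
  apply upperDensity1_mono_of_eventually
  filter_upwards [(Metric.tendsto_nhds.mp hxw) (ε / 2) (half_pos hε)] with n hn hw hx
  rw [Real.dist_0_eq_abs] at hn
  exact hw (add_halves ε ▸ mem_add_Ioo_of_abs_sub_lt hx hn)

lemma idxSet1_eq_of_tendsto_sub {x w : ℕ → ℝ} (hxw : Tendsto (fun n => w n - x n) atTop (𝓝 0))
    (A : Set ℝ) : idxSet1 w A = idxSet1 x A :=
  le_antisymm (idxSet1_le_of_tendsto_sub (by simpa using hxw.neg) A)
    (idxSet1_le_of_tendsto_sub hxw A)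

lemma add_mem_image_add_add_iff {G : Type*} [AddCommGroup G] (A S : Set G) (a z : G) :
    a + z ∈ (· + z) '' A + S ↔ a ∈ A + S := by
  rw [← add_singleton, add_right_comm, add_singleton, (add_left_injective z).mem_set_image]

lemma idxSet1_add_const (x : ℕ → ℝ) (z : ℝ) (A : Set ℝ) :
    idxSet1 (fun n => x n + z) ((· + z) '' A) = idxSet1 x A := by
  simp only [idxSet1, add_mem_image_add_add_iff]

lemma idxSet1_add_of_tendsto {zn : ℕ → ℝ} {z : ℝ} (hz : Tendsto zn atTop (𝓝 z))
    (x : ℕ → ℝ) (A : Set ℝ) :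
    idxSet1 (fun n => x n + zn n) ((· + z) '' A) = idxSet1 x A := by
  rw [← idxSet1_add_const x z A]
  exact idxSet1_eq_of_tendsto_sub (by simpa using hz.sub_const z) _

lemma JordanMeasurable1.image_sub_const {A : Set ℝ} (hA : JordanMeasurable1 A) (z : ℝ) :
    JordanMeasurable1 ((· - z) '' A) := by
  refine ⟨?_, ?_⟩
  · rw [← sub_singleton]
    exact hA.1.sub Bornology.isBounded_singleton
  · rw [image_sub_right, ← Homeomorph.coe_addRight, ← Homeomorph.preimage_frontier]
    simpa using hA.2

theorem index_translation_general (x y zn : ℕ → ℝ) (z c : ℝ)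
    (hy : ∀ n, y n = zn n + x n) (hz : Tendsto zn atTop (nhds z))
    (hidx : ∀ A : Set ℝ, JordanMeasurable1 A →
      idxSet1 x A = jordanMeasure1 (Set.Ioo 0 1 ∩ {t | c * lerchg t ∈ A})) :
    (∀ A : Set ℝ, JordanMeasurable1 A →
      idxSet1 y A =
        jordanMeasure1 (Set.Ioo 0 1 ∩ {t | c * lerchg t ∈ (fun a => a - z) '' A})) ∧
    (∀ (x' zn' : ℕ → ℝ) (z' : ℝ), Tendsto zn' atTop (nhds z') →
      ∀ A : Set ℝ,
        idxSet1 (fun n => x' n + zn' n) ((fun a => a + z') '' A) = idxSet1 x' A) := by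
  refine ⟨fun A hA => ?_, fun x' zn' z' hz' A => idxSet1_add_of_tendsto hz' x' A⟩
  have hy' : y = fun n => x n + zn n := funext fun n => (hy n).trans (add_comm _ _)
  have hA' : (· + z) '' ((· - z) '' A) = A := by simp [image_image]
  rw [hy', ← hidx _ (hA.image_sub_const z), ← idxSet1_add_of_tendsto hz x, hA']

theorem index_translation (x y zn : ℕ → ℝ) (z c : ℝ) (hc : c ≠ 0)
    (hy : ∀ n, y n = zn n + x n) (hz : Tendsto zn atTop (nhds z))
    (hidx : ∀ A : Set ℝ, JordanMeasurable1 A →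
      idxSet1 x A = jordanMeasure1 (Set.Ioo 0 1 ∩ {t | c * lerchg t ∈ A})) :
    (∀ A : Set ℝ, JordanMeasurable1 A →
      idxSet1 y A =
        jordanMeasure1 (Set.Ioo 0 1 ∩ {t | c * lerchg t ∈ (fun a => a - z) '' A})) ∧
    (∀ (x' zn' : ℕ → ℝ) (z' : ℝ), Tendsto zn' atTop (nhds z') →
      ∀ A : Set ℝ,
        idxSet1 (fun n => x' n + zn' n) ((fun a => a + z') '' A) = idxSet1 x' A) :=
  index_translation_general x y zn z c hy hz hidx
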